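/- Let n ∈ ℕ and let A, B₁, B₂ be ωcpos, each equipped with a continuous n-ary operation σ_A : Aⁿ → A, σ_{B₁} : B₁ⁿ → B₁, σ_{B₂} : B₂ⁿ → B₂ (continuous with respect to the componentwise order on the n-th power). Suppose h₁ : A → B₁ is a continuous map that preserves the operation (h₁(σ_A(a)) = σ_{B₁}(h₁ ∘ a) for all a ∈ Aⁿ) and has ω-dense image in B₁, and suppose p : B₁ → B₂ is a continuous map such that the composite p ∘ h₁ preserves the operations (p(h₁(σ_A(a))) = σ_{B₂}(p ∘ h₁ ∘ a) for all a ∈ Aⁿ). Then p itself preserves the operations: p(σ_{B₁}(b)) = σ_{B₂}(p ∘ b) for all b ∈ B₁ⁿ. -/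

import Mathlib

open OmegaCompletePartialOrder

universe u

/-- A subset `S` of an ωcpo `P` is a sub-ωcpo if it is closed under suprema of ω-chains
contained in it. -/
def IsSubOmegaCpo {P : Type u} [OmegaCompletePartialOrder P] (S : Set P) : Prop :=
  ∀ c : Chain P, (∀ i ∈ c, i ∈ S) → ωSup c ∈ S

/-- A subset `X` of an ωcpo `P` is ω-dense if the only sub-ωcpo of `P` containing `X` is `P`
itself. -/
def OmegaDense {P : Type u} [OmegaCompletePartialOrder P] (X : Set P) : Prop :=
  ∀ S : Set P, IsSubOmegaCpo S → X ⊆ S → S = Set.univ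

/-! The maps `b ↦ p (σB₁ b)` and `b ↦ σB₂ (p ∘ b)` are continuous on `B₁ⁿ`, so they agree on a
sub-ωcpo; it contains `(range h₁)ⁿ`, because there the two sides are `p (h₁ (σA a))` and
`σB₂ (p ∘ h₁ ∘ a)`. A finite power of an ω-dense set is ω-dense (replace one coordinate at a
time by an arbitrary element, the fibres being sub-ωcpos), so they agree everywhere. -/

namespace OmegaCompletePartialOrder

lemma ωScottContinuous.update {ι : Type*} [DecidableEq ι] {P : ι → Type*}
    [∀ i, OmegaCompletePartialOrder (P i)] (b : ∀ i, P i) (k : ι) :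
    ωScottContinuous (Function.update b k) := by
  refine ωScottContinuous.of_apply₂ fun i => ?_
  rcases eq_or_ne i k with rfl | hik
  · simp only [Function.update_self]
    exact ωScottContinuous.id
  · simp only [Function.update_of_ne hik]
    exact ωScottContinuous.const

lemma ωScottContinuous.comp_left {ι : Type*} {P Q : Type*} [OmegaCompletePartialOrder P]
    [OmegaCompletePartialOrder Q] {f : P → Q} (hf : ωScottContinuous f) :
    ωScottContinuous fun b : ι → P => f ∘ b :=
  ωScottContinuous.of_apply₂ fun i => hf.comp (ωScottContinuous.apply i)

end OmegaCompletePartialOrder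

section SubOmegaCpo

variable {P Q : Type*} [OmegaCompletePartialOrder P] [OmegaCompletePartialOrder Q]

lemma IsSubOmegaCpo.preimage {S : Set Q} (hS : IsSubOmegaCpo S) {f : P → Q}
    (hf : ωScottContinuous f) : IsSubOmegaCpo (f ⁻¹' S) := by
  intro c hc
  rw [Set.mem_preimage, hf.map_ωSup]
  exact hS _ fun _ ⟨j, hj⟩ => hj ▸ hc (c j) ⟨j, rfl⟩

lemma isSubOmegaCpo_setOf_eq {f g : P → Q} (hf : ωScottContinuous f)
    (hg : ωScottContinuous g) : IsSubOmegaCpo {x | f x = g x} := by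
  intro c hc
  rw [Set.mem_ofPred_eq, hf.map_ωSup, hg.map_ωSup]
  congr 1
  ext j
  exact hc (c j) ⟨j, rfl⟩

end SubOmegaCpo

theorem OmegaDense.pi {ι : Type*} [Fintype ι] [DecidableEq ι] {P : ι → Type*}
    [∀ i, OmegaCompletePartialOrder (P i)] {X : ∀ i, Set (P i)} (hX : ∀ i, OmegaDense (X i)) :
    OmegaDense (Set.univ.pi X) := by
  intro S hS hXS
  suffices h : ∀ s : Finset ι, ∀ b : ∀ i, P i, (∀ i ∉ s, b i ∈ X i) → b ∈ S by
    exact Set.eq_univ_of_forall fun b => h Finset.univ b fun i hi => absurd (Finset.mem_univ i) hi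
  intro s
  induction s using Finset.induction_on with
  | empty => exact fun b hb => hXS fun i _ => hb i (Finset.notMem_empty i)
  | insert k s _ ih =>
    intro b hb
    have hfiber : Function.update b k ⁻¹' S = Set.univ := by
      refine hX k _ (hS.preimage (ωScottContinuous.update b k)) fun x hx => ih _ fun i hi => ?_
      rcases eq_or_ne i k with rfl | hik
      · simpa only [Function.update_self] using hx
      · simpa only [Function.update_of_ne hik] using hb i (by simp [hik, hi])
    have hb_mem : b k ∈ Function.update b k ⁻¹' S := hfiber ▸ Set.mem_univ (b k)
    rwa [Set.mem_preimage, Function.update_eq_self] at hb_mem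

theorem continuous_map_preserves_ops_of_omegaDense_general {n : ℕ} {A B₁ B₂ : Type u}
    [OmegaCompletePartialOrder A] [OmegaCompletePartialOrder B₁]
    [OmegaCompletePartialOrder B₂]
    (σA : (Fin n → A) → A)
    (σB₁ : (Fin n → B₁) → B₁) (hσB₁ : ωScottContinuous σB₁)
    (σB₂ : (Fin n → B₂) → B₂) (hσB₂ : ωScottContinuous σB₂)
    (h₁ : A → B₁)
    (hhom : ∀ a : Fin n → A, h₁ (σA a) = σB₁ (h₁ ∘ a))
    (hdense : OmegaDense (Set.range h₁))
    (p : B₁ → B₂) (hp : ωScottContinuous p)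
    (hcomp : ∀ a : Fin n → A, p (h₁ (σA a)) = σB₂ (p ∘ h₁ ∘ a)) :
    ∀ b : Fin n → B₁, p (σB₁ b) = σB₂ (p ∘ b) := by
  have hsub : IsSubOmegaCpo {b : Fin n → B₁ | p (σB₁ b) = σB₂ (p ∘ b)} :=
    isSubOmegaCpo_setOf_eq (hp.comp hσB₁) (hσB₂.comp hp.comp_left)
  have hrange : Set.univ.pi (fun _ => Set.range h₁) ⊆ {b | p (σB₁ b) = σB₂ (p ∘ b)} := by
    intro b hb
    choose a ha using fun i => hb i (Set.mem_univ i)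
    obtain rfl : h₁ ∘ a = b := funext ha
    rw [Set.mem_ofPred_eq, ← hhom, hcomp]
  exact Set.eq_univ_iff_forall.mp ((OmegaDense.pi fun _ => hdense) _ hsub hrange)

/-- Let `A`, `B₁`, `B₂` be ωcpos equipped with continuous `n`-ary operations `σA`, `σB₁`,
`σB₂` (continuous with respect to the componentwise order on the `n`-th power).  If
`h₁ : A → B₁` is a continuous map preserving the operations whose image is ω-dense in `B₁`,
and `p : B₁ → B₂` is a continuous map such that the composite `p ∘ h₁` preserves the
operations, then `p` itself preserves the operations. -/
theorem continuous_map_preserves_ops_of_omegaDense {n : ℕ} {A B₁ B₂ : Type u}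
    [OmegaCompletePartialOrder A] [OmegaCompletePartialOrder B₁]
    [OmegaCompletePartialOrder B₂]
    (σA : (Fin n → A) → A) (hσA : ωScottContinuous σA)
    (σB₁ : (Fin n → B₁) → B₁) (hσB₁ : ωScottContinuous σB₁)
    (σB₂ : (Fin n → B₂) → B₂) (hσB₂ : ωScottContinuous σB₂)
    (h₁ : A → B₁) (hh₁ : ωScottContinuous h₁)
    (hhom : ∀ a : Fin n → A, h₁ (σA a) = σB₁ (h₁ ∘ a))
    (hdense : OmegaDense (Set.range h₁))
    (p : B₁ → B₂) (hp : ωScottContinuous p)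
    (hcomp : ∀ a : Fin n → A, p (h₁ (σA a)) = σB₂ (p ∘ h₁ ∘ a)) :
    ∀ b : Fin n → B₁, p (σB₁ b) = σB₂ (p ∘ b) :=
  continuous_map_preserves_ops_of_omegaDense_general σA σB₁ hσB₁ σB₂ hσB₂ h₁ hhom hdense p hp hcomp
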